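/- If a monoid S is left reversible, then S satisfies condition right-FI with n = 2: any two elements of any indecomposable right S-act are connected by a scheme of length 2. -/

import Mathlib

/-- `act` is a (unital, associative) right `S`-action on `A`. -/
def IsRAct (S : Type*) [Monoid S] {A : Type*} (act : A → S → A) : Prop :=
  (∀ (a : A) (s t : S), act (act a s) t = act a (s * t)) ∧ ∀ a : A, act a 1 = a

/-- `B` is a subact: a nonempty subset closed under the action. -/
def IsSubact {S A : Type*} (act : A → S → A) (B : Set A) : Prop :=
  B.Nonempty ∧ ∀ a ∈ B, ∀ s : S, act a s ∈ B

/-- An act is indecomposable if it is not the disjoint union of two subacts. -/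
def Indecomp {S A : Type*} (act : A → S → A) : Prop :=
  ¬ ∃ B C : Set A, IsSubact act B ∧ IsSubact act C ∧ B ∩ C = ∅ ∧ B ∪ C = Set.univ

/-- `S` is left reversible: any two principal (hence any two) right ideals intersect. -/
def LeftReversible (S : Type*) [Monoid S] : Prop :=
  ∀ a b : S, ∃ u v : S, a * u = b * v

/-- A scheme of length `n ≥ 1` connecting `a` to `b`:
`a = a₁s₁, aᵢtᵢ = aᵢ₊₁sᵢ₊₁ (1 ≤ i < n), aₙtₙ = b` (1-indexed). -/
def SchemeOfLength {S A : Type*} [Monoid S] (act : A → S → A) (n : ℕ) (a b : A) : Prop :=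
  ∃ (c : ℕ → A) (s t : ℕ → S),
    a = act (c 1) (s 1) ∧
    (∀ i, 1 ≤ i → i < n → act (c i) (t i) = act (c (i + 1)) (s (i + 1))) ∧
    act (c n) (t n) = b

/-!
In a left reversible monoid, the elements `z` with `xS ∩ zS ≠ ∅` form a subact containing `x`,
and its complement is closed under the action as well. Indecomposability forces this subact to be
everything; for `x = a` this gives `a u = b v` for some `u, v`, and that is the scheme
`a = a·1, a u = b v, b·1 = b`.
-/

theorem Indecomp.eq_univ_of_isSubact {S A : Type*} {act : A → S → A} (hind : Indecomp act)
    {B : Set A} (hB : IsSubact act B) (hBc : ∀ a ∈ Bᶜ, ∀ s : S, act a s ∈ Bᶜ) :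
    B = Set.univ := by
  by_contra hne
  exact hind ⟨B, Bᶜ, hB, ⟨Set.nonempty_compl.2 hne, hBc⟩, Set.inter_compl_self B,
    Set.union_compl_self B⟩

section Meets

variable {S A : Type*} [Monoid S] {act : A → S → A}

def ActMeets (act : A → S → A) (x y : A) : Prop :=
  ∃ u v : S, act x u = act y v

theorem actMeets_refl (x : A) : ActMeets act x x :=
  ⟨1, 1, rfl⟩

theorem ActMeets.of_act_right (hact : IsRAct S act) {x y : A} {s : S}
    (h : ActMeets act x (act y s)) : ActMeets act x y := by
  obtain ⟨u, v, huv⟩ := h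
  exact ⟨u, s * v, by rw [huv, hact.1]⟩

theorem ActMeets.act_right (hrev : LeftReversible S) (hact : IsRAct S act) {x y : A}
    (h : ActMeets act x y) (s : S) : ActMeets act x (act y s) := by
  obtain ⟨u, v, huv⟩ := h
  obtain ⟨p, q, hpq⟩ := hrev v s
  refine ⟨u * p, q, ?_⟩
  rw [← hact.1, huv, hact.1, hpq, ← hact.1]

theorem isSubact_actMeets (hrev : LeftReversible S) (hact : IsRAct S act) (x : A) :
    IsSubact act {y | ActMeets act x y} :=
  ⟨⟨x, actMeets_refl x⟩, fun _ hy s => hy.act_right hrev hact s⟩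

theorem Indecomp.actMeets (hrev : LeftReversible S) (hact : IsRAct S act) (hind : Indecomp act)
    (x y : A) : ActMeets act x y := by
  have huniv := hind.eq_univ_of_isSubact (isSubact_actMeets hrev hact x)
    fun _ hz _ hzs => hz (hzs.of_act_right hact)
  exact Set.eq_univ_iff_forall.1 huniv y

end Meets

theorem schemeOfLength_two_of_act_eq {S A : Type*} [Monoid S] {act : A → S → A}
    (hact : IsRAct S act) {a b : A} {u v : S} (h : act a u = act b v) :
    SchemeOfLength act 2 a b := by
  refine ⟨fun i => if i = 1 then a else b, fun i => if i = 1 then 1 else v,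
    fun i => if i = 1 then u else 1, by simp [hact.2], ?_, by simp [hact.2]⟩
  intro i hi1 hi2
  obtain rfl : i = 1 := by omega
  simpa using h

theorem stmt13 (S : Type*) [Monoid S] (hrev : LeftReversible S) :
    ∀ (A : Type*) (act : A → S → A), Nonempty A → IsRAct S act → Indecomp act →
      ∀ a b : A, SchemeOfLength act 2 a b := by
  intro A act _ hact hind a b
  obtain ⟨u, v, huv⟩ := hind.actMeets hrev hact a b
  exact schemeOfLength_two_of_act_eq hact huv
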